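/- arXiv:2010.11849 — 5 statements merged into one kernel-verified Lean document; each statement's English description precedes it below -/
import Mathlib

section
/- Let k be a field, L a Lie algebra over k, and let L₀ and n be Lie subalgebras of L such that L = L₀ + n as k-subspaces (every element of L is a sum of an element of L₀ and an element of n). Let M be a Lie module over L and V a finite-dimensional k-subspace of M with n · V ⊆ V. If the smallest L-submodule of M containing V is M itself, then the smallest L₀-submodule of M (M regarded as a Lie module over L₀ by restriction) containing V is also M. In particular, M is generated as an L₀-module by finitely many elements. -/
section Aux

variable {k : Type*} [Field k] {L : Type*} [LieRing L] [LieAlgebra k L]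
  {M : Type*} [AddCommGroup M] [Module k M] [LieRingModule L M] [LieModule k L M]

/-- Increasing chain of subspaces obtained from `V` by repeatedly adding brackets with `L₀`. -/
def chainW (L₀ : LieSubalgebra k L) (V : Submodule k M) : ℕ → Submodule k M
  | 0 => V
  | i + 1 => chainW L₀ V i ⊔
      Submodule.span k {m | ∃ a ∈ L₀, ∃ w ∈ chainW L₀ V i, m = ⁅a, w⁆}

lemma chainW_mono (L₀ : LieSubalgebra k L) (V : Submodule k M) :
    Monotone (chainW L₀ V) :=
  monotone_nat_of_le_succ fun i => le_sup_left

lemma chainW_lie_mem (L₀ : LieSubalgebra k L) (V : Submodule k M)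
    {a : L} (ha : a ∈ L₀) {i : ℕ} {w : M} (hw : w ∈ chainW L₀ V i) :
    ⁅a, w⁆ ∈ chainW L₀ V (i + 1) :=
  Submodule.mem_sup_right (Submodule.subset_span ⟨a, ha, w, hw, rfl⟩)

lemma chainW_n_stable (L₀ n : LieSubalgebra k L)
    (hsum : ∀ z : L, ∃ a ∈ L₀, ∃ b ∈ n, z = a + b)
    (V : Submodule k M) (hnV : ∀ x ∈ n, ∀ v ∈ V, ⁅x, v⁆ ∈ V) :
    ∀ i, ∀ x ∈ n, ∀ w ∈ chainW L₀ V i, ⁅x, w⁆ ∈ chainW L₀ V i := by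
  intro i
  induction i with
  | zero => exact hnV
  | succ i ih =>
    intro x hx w hw
    have key : chainW L₀ V (i + 1) ≤
        (chainW L₀ V (i + 1)).comap (LieModule.toEnd k L M x) := by
      apply sup_le
      · intro w hw
        exact chainW_mono L₀ V (Nat.le_succ i) (ih x hx w hw)
      · rw [Submodule.span_le]
        rintro m ⟨a, ha, wj, hwj, rfl⟩
        simp only [SetLike.mem_coe, Submodule.mem_comap, LieModule.toEnd_apply_apply]
        rw [leibniz_lie]
        apply Submodule.add_mem
        · obtain ⟨a', ha', b', hb', hab⟩ := hsum ⁅x, a⁆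
          rw [hab, add_lie]
          exact Submodule.add_mem _ (chainW_lie_mem L₀ V ha' hwj)
            (chainW_mono L₀ V (Nat.le_succ i) (ih b' hb' wj hwj))
        · exact chainW_lie_mem L₀ V ha (ih x hx wj hwj)
    exact key hw

end Aux

/-- If `L = L₀ + n`, `V` is a finite-dimensional subspace of a Lie module `M`
stable under `n`, and `V` generates `M` as an `L`-module, then `V` generates `M` as an
`L₀`-module; in particular `M` is generated over `L₀` by finitely many elements. -/
theorem generated_over_subalgebra_of_locally_finite
    (k : Type*) [Field k]
    (L : Type*) [LieRing L] [LieAlgebra k L]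
    (L₀ n : LieSubalgebra k L)
    (hsum : ∀ z : L, ∃ a ∈ L₀, ∃ b ∈ n, z = a + b)
    (M : Type*) [AddCommGroup M] [Module k M] [LieRingModule L M] [LieModule k L M]
    (V : Submodule k M) (hVfd : FiniteDimensional k V)
    (hnV : ∀ x ∈ n, ∀ v ∈ V, ⁅x, v⁆ ∈ V)
    (hgen : LieSubmodule.lieSpan k L (V : Set M) = ⊤) :
    (∀ N : Submodule k M, (V : Set M) ⊆ N →
        (∀ x ∈ L₀, ∀ m ∈ N, ⁅x, m⁆ ∈ N) → N = ⊤) ∧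
    ∃ s : Finset M, ∀ N : Submodule k M, (s : Set M) ⊆ N →
        (∀ x ∈ L₀, ∀ m ∈ N, ⁅x, m⁆ ∈ N) → N = ⊤ := by
  -- the union of the chain is all of `M`
  set W := chainW L₀ V with hW
  have hdir : Directed (· ≤ ·) W := (chainW_mono L₀ V).directed_le
  have hmem_iSup : ∀ m : M, m ∈ (⨆ i, W i) ↔ ∃ i, m ∈ W i := fun m =>
    Submodule.mem_iSup_of_directed W hdir
  -- the union is an `L`-Lie submodule
  have hstab : ∀ z : L, ∀ m ∈ (⨆ i, W i), ⁅z, m⁆ ∈ (⨆ i, W i) := by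
    intro z m hm
    obtain ⟨i, hi⟩ := (hmem_iSup m).1 hm
    obtain ⟨a, ha, b, hb, hab⟩ := hsum z
    rw [hab, add_lie]
    apply Submodule.add_mem
    · exact (hmem_iSup _).2 ⟨i + 1, chainW_lie_mem L₀ V ha hi⟩
    · exact (hmem_iSup _).2 ⟨i, chainW_n_stable L₀ n hsum V hnV i b hb m hi⟩
  let Winf : LieSubmodule k L M :=
    { toSubmodule := ⨆ i, W i
      lie_mem := fun {z m} hm => hstab z m hm }
  have htop : (⨆ i, W i) = ⊤ := by
    have h1 : LieSubmodule.lieSpan k L (V : Set M) ≤ Winf := by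
      rw [LieSubmodule.lieSpan_le]
      exact Set.Subset.trans (by exact SetLike.coe_subset_coe.2 (le_iSup W 0)) le_rfl
    rw [hgen] at h1
    exact eq_top_iff.2 h1
  have hfirst : ∀ N : Submodule k M, (V : Set M) ⊆ N →
      (∀ x ∈ L₀, ∀ m ∈ N, ⁅x, m⁆ ∈ N) → N = ⊤ := by
    intro N hVN hNstab
    have hWN : ∀ i, W i ≤ N := by
      intro i
      induction i with
      | zero => exact hVN
      | succ i ih =>
        apply sup_le ih
        rw [Submodule.span_le]
        rintro m ⟨a, ha, wj, hwj, rfl⟩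
        exact hNstab a ha wj (ih hwj)
    rw [eq_top_iff]
    intro m _
    obtain ⟨i, hi⟩ := (hmem_iSup m).1 (htop ▸ Submodule.mem_top)
    exact hWN i hi
  refine ⟨hfirst, ?_⟩
  obtain ⟨s, hs⟩ := (Submodule.fg_iff_finiteDimensional V).2 hVfd
  refine ⟨s, fun N hsN hNstab => ?_⟩
  apply hfirst N ?_ hNstab
  rw [← hs]
  exact Submodule.span_le.2 hsN
end

section
/- Let L be a Lie algebra over ℂ, H a Lie subalgebra of L, and M a Lie module over L that is spanned as a ℂ-vector space by the union of its weight spaces M_μ = {v ∈ M : h · v = μ(h) • v for all h ∈ H} over all linear functionals μ : H → ℂ. Suppose there is a linear functional λ and a nonzero vector w ∈ M such that M_λ = ℂ • w and the smallest L-submodule of M containing w is M. Then the sum of all proper L-submodules of M is again a proper L-submodule; in other words, M has a unique maximal proper L-submodule. -/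
/-!
Simultaneous eigenvectors of any family of endomorphisms (no commutativity is needed) with
distinct eigenvalue functions are independent, and more precisely a subspace invariant under the
family contains every component of each of its elements. So a proper submodule `N` of `M`, which
cannot contain `w`, meets `M_λ = ℂ w` trivially and lies in the sum of the other weight spaces.
That sum is a proper subspace not containing `w`, and it contains the sum of all proper submodules.
-/

open Module End Set

section SimultaneousEigenspaces

variable {ι K M : Type*} [Field K] [AddCommGroup M] [Module K M] (f : ι → End K M)

theorem Submodule.mem_of_sum_mem_of_mem_iInf_eigenspace {N : Submodule K M}
    (hN : ∀ i, MapsTo (f i) N N) {s : Finset (ι → K)} {v : (ι → K) → M}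
    (hv : ∀ χ ∈ s, v χ ∈ ⨅ i, (f i).eigenspace (χ i)) (hsum : ∑ χ ∈ s, v χ ∈ N) :
    ∀ χ ∈ s, v χ ∈ N := by
  classical
  induction s using Finset.induction_on generalizing v with
  | empty => simp
  | insert χ₁ s hχ₁ ih =>
    rw [Finset.sum_insert hχ₁] at hsum
    rw [Finset.forall_mem_insert] at hv ⊢
    have hv_eigen (χ : ι → K) (hχ : v χ ∈ ⨅ i, (f i).eigenspace (χ i)) (i : ι) :
        f i (v χ) = χ i • v χ :=
      mem_eigenspace_iff.1 (Submodule.mem_iInf _ |>.1 hχ i)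
    have hs : ∀ χ ∈ s, v χ ∈ N := by
      intro χ hχ
      obtain ⟨i, hi⟩ := Function.ne_iff.1 (ne_of_mem_of_not_mem hχ hχ₁)
      -- `f i - χ₁ i` kills the `χ₁`-component and rescales the others by `χ i - χ₁ i`.
      have hshift : ∑ χ ∈ s, (χ i - χ₁ i) • v χ ∈ N := by
        have hmem := N.sub_mem (hN i hsum) (N.smul_mem (χ₁ i) hsum)
        rwa [map_add, map_sum, hv_eigen χ₁ hv.1, smul_add, Finset.smul_sum,
          add_sub_add_comm, sub_self, zero_add, ← Finset.sum_sub_distrib, Finset.sum_congr rfl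
            fun χ hχ => by rw [hv_eigen χ (hv.2 χ hχ), ← sub_smul]] at hmem
      have := ih (fun χ hχ => Submodule.smul_mem _ _ (hv.2 χ hχ)) hshift χ hχ
      exact (N.smul_mem_iff (sub_ne_zero.2 hi)).1 this
    exact ⟨(N.add_mem_iff_left (N.sum_mem hs)).1 hsum, hs⟩

theorem Module.End.iSupIndep_iInf_eigenspace :
    iSupIndep fun χ : ι → K => ⨅ i, (f i).eigenspace (χ i) := by
  refine (iSupIndep_iff_finsetSum_eq_zero_imp_eq_zero _).2 fun s v hv hsum χ hχ => ?_
  have hN (i : ι) : MapsTo (f i) (⊥ : Submodule K M) (⊥ : Submodule K M) := fun x hx => by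
    rw [SetLike.mem_coe, Submodule.mem_bot] at hx ⊢
    rw [hx, map_zero]
  exact (Submodule.mem_bot K).1 <|
    Submodule.mem_of_sum_mem_of_mem_iInf_eigenspace f hN hv (hsum ▸ zero_mem _) χ hχ

theorem Submodule.le_iSup_inf_iInf_eigenspace {N : Submodule K M} (hN : ∀ i, MapsTo (f i) N N)
    (hNle : N ≤ ⨆ χ : ι → K, ⨅ i, (f i).eigenspace (χ i)) :
    N ≤ ⨆ χ : ι → K, N ⊓ ⨅ i, (f i).eigenspace (χ i) := by
  intro x hx
  obtain ⟨c, hc, rfl⟩ := (mem_iSup_iff_exists_finsupp _ x).1 (hNle hx)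
  have hcN := mem_of_sum_mem_of_mem_iInf_eigenspace f hN (fun χ _ => hc χ) hx
  exact sum_mem fun χ hχ => mem_iSup_of_mem χ ⟨hcN χ hχ, hc χ⟩

theorem Submodule.le_iSup_ne_iInf_eigenspace_of_disjoint {N : Submodule K M}
    (hN : ∀ i, MapsTo (f i) N N) (hNle : N ≤ ⨆ χ : ι → K, ⨅ i, (f i).eigenspace (χ i))
    {χ₀ : ι → K} (hdisj : Disjoint N (⨅ i, (f i).eigenspace (χ₀ i))) :
    N ≤ ⨆ χ ≠ χ₀, ⨅ i, (f i).eigenspace (χ i) := by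
  refine (le_iSup_inf_iInf_eigenspace f hN hNle).trans <| iSup_le fun χ => ?_
  by_cases hχ : χ = χ₀
  · subst hχ
    simp [hdisj.eq_bot]
  · exact inf_le_right.trans <|
      le_iSup₂ (f := fun χ (_ : χ ≠ χ₀) => ⨅ i, (f i).eigenspace (χ i)) χ hχ

end SimultaneousEigenspaces

theorem LieModule.coe_iInf_eigenspace_toEnd {K L M : Type*} [CommRing K] [LieRing L]
    [LieAlgebra K L] [AddCommGroup M] [Module K M] [LieRingModule L M] [LieModule K L M]
    (H : LieSubalgebra K L) (χ : H → K) :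
    ((⨅ h : H, (toEnd K L M h).eigenspace (χ h) : Submodule K M) : Set M) =
      {v | ∀ h : H, ⁅(h : L), v⁆ = χ h • v} := by
  ext v
  simp

theorem LieSubmodule.eq_top_of_mem_of_lieSpan_eq_top {R L M : Type*} [CommRing R] [LieRing L]
    [AddCommGroup M] [Module R M] [LieRingModule L M] {w : M}
    (hgen : lieSpan R L {w} = ⊤) {N : LieSubmodule R L M} (hw : w ∈ N) : N = ⊤ :=
  top_unique <| hgen ▸ lieSpan_le.2 (singleton_subset_iff.2 hw)

open LieModule in
/-- A weight module generated by a weight vector `w` spanning its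
one-dimensional top weight space `M_λ` has a unique maximal proper submodule: the sum of all
proper `L`-submodules is proper. -/
theorem unique_maximal_submodule_of_highest_weight_module
    (L : Type*) [LieRing L] [LieAlgebra ℂ L]
    (H : LieSubalgebra ℂ L)
    (M : Type*) [AddCommGroup M] [Module ℂ M] [LieRingModule L M] [LieModule ℂ L M]
    (hwt : Submodule.span ℂ
      (⋃ μ : Module.Dual ℂ H, {v : M | ∀ h : H, ⁅(h : L), v⁆ = μ h • v}) = ⊤)
    (lam : Module.Dual ℂ H) (w : M) (hw : w ≠ 0)
    (hlam : {v : M | ∀ h : H, ⁅(h : L), v⁆ = lam h • v} =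
      (Submodule.span ℂ {w} : Submodule ℂ M))
    (hgen : LieSubmodule.lieSpan ℂ L {w} = ⊤) :
    sSup {N : LieSubmodule ℂ L M | N ≠ ⊤} ≠ ⊤ := by
  set f : H → End ℂ M := fun h => toEnd ℂ L M h
  set E : (H → ℂ) → Submodule ℂ M := fun χ => ⨅ h, (f h).eigenspace (χ h)
  have hE_lam : E lam = ℂ ∙ w :=
    SetLike.coe_injective <| (coe_iInf_eigenspace_toEnd H lam).trans hlam
  have hE_top : ⨆ χ, E χ = ⊤ :=
    top_unique <| hwt ▸ Submodule.span_le.2 <| iUnion_subset fun μ =>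
      (coe_iInf_eigenspace_toEnd H μ).symm.subset.trans (SetLike.coe_mono (le_iSup E μ))
  have hw_notMem : w ∉ ⨆ χ ≠ ⇑lam, E χ := fun hmem =>
    hw <| Submodule.disjoint_def.1 (iSupIndep_iInf_eigenspace f lam)
      w (hE_lam.ge (Submodule.mem_span_singleton_self w)) hmem
  have hproper_le (N : LieSubmodule ℂ L M) (hN : N ≠ ⊤) :
      (N : Submodule ℂ M) ≤ ⨆ χ ≠ ⇑lam, E χ := by
    have hwN : w ∉ N := fun hwN => hN (LieSubmodule.eq_top_of_mem_of_lieSpan_eq_top hgen hwN)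
    refine Submodule.le_iSup_ne_iInf_eigenspace_of_disjoint f (fun h _ hv => N.lie_mem hv)
      (hE_top ▸ le_top) ?_
    exact ((Submodule.disjoint_span_singleton' hw).2 hwN).mono_right hE_lam.le
  intro htop
  have hsSup_le : ((⊤ : LieSubmodule ℂ L M) : Submodule ℂ M) ≤ ⨆ χ ≠ ⇑lam, E χ := by
    rw [← htop, LieSubmodule.sSup_toSubmodule_eq_iSup]
    exact iSup₂_le hproper_le
  exact hw_notMem (hsSup_le trivial)
end

section
/- Let L be a finite-dimensional Lie algebra over ℂ, b a solvable Lie subalgebra of L, M a nonzero Lie module over L, and V a nonzero finite-dimensional ℂ-subspace of M with b · V ⊆ V such that the smallest L-submodule of M containing V is M. Then there exist n ≥ 1 and a chain 0 = M₀ ≤ M₁ ≤ ⋯ ≤ Mₙ = M of L-submodules such that for each i the quotient Lie module M_i / M_{i−1} is nonzero and is generated as an L-module by a single vector v̄ satisfying x · v̄ ∈ ℂ • v̄ for all x ∈ b. -/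
/-!
Work in `M / N` for the submodule `N` built so far. If `N ≠ M`, the image of `V` there is a
nonzero finite-dimensional module over the solvable algebra `b`, so by Lie's theorem it contains a
common eigenvector; adjoining the `L`-submodule generated by a preimage `v ∈ V` gives the next step.
Each step strictly enlarges `N ∩ V`, so since `V` is finite-dimensional the process reaches `M`.
-/

open LieModule LieSubmodule

theorem Relation.ReflTransGen.exists_nat_chain {α : Type*} {r : α → α → Prop} {a b : α}
    (h : Relation.ReflTransGen r a b) :
    ∃ n : ℕ, ∃ f : ℕ → α, f 0 = a ∧ f n = b ∧ ∀ i < n, r (f i) (f (i + 1)) := by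
  induction h using Relation.ReflTransGen.head_induction_on with
  | refl => exact ⟨0, fun _ => b, rfl, rfl, by simp⟩
  | @head a c hac _ ih =>
    obtain ⟨n, f, hf0, hfn, hf⟩ := ih
    refine ⟨n + 1, fun i => Nat.casesOn i a f, rfl, hfn, fun i hi => ?_⟩
    rcases i with _ | i
    · simpa [hf0] using hac
    · exact hf i (by omega)

section Step

variable {R L M : Type*} [CommRing R] [LieRing L] [LieAlgebra R L]
  [AddCommGroup M] [Module R M] [LieRingModule L M] (b : LieSubalgebra R L)

/-- `N' / N` is a nonzero highest weight module: it is generated by the image of `v`, a common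
eigenvector of `b`. -/
def LieSubmodule.IsHighestWeightStep (N N' : LieSubmodule R L M) : Prop :=
  ∃ v : M, v ∈ N' ∧ v ∉ N ∧ N' = N ⊔ lieSpan R L {v} ∧
    ∀ x : b, ∃ c : R, ⁅(x : L), v⁆ - c • v ∈ N

variable {b} in
theorem LieSubmodule.IsHighestWeightStep.le {N N' : LieSubmodule R L M}
    (h : N.IsHighestWeightStep b N') : N ≤ N' := by
  obtain ⟨v, -, -, rfl, -⟩ := h
  exact le_sup_left

end Step

section LieTheorem

variable {k L M : Type*} [Field k] [CharZero k] [IsAlgClosed k] [LieRing L] [LieAlgebra k L]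
  [AddCommGroup M] [Module k M] [LieRingModule L M] [LieModule k L M]

theorem LieSubmodule.exists_forall_lie_eq_smul_of_isSolvable [LieAlgebra.IsSolvable L]
    (W : LieSubmodule k L M) [Module.Finite k W] [Nontrivial W] :
    ∃ χ : Module.Dual k L, ∃ w ∈ W, w ≠ 0 ∧ ∀ x : L, ⁅x, w⁆ = χ x • w := by
  obtain ⟨χ, hχ⟩ := exists_nontrivial_weightSpace_of_isSolvable k L W
  obtain ⟨⟨w, hw⟩, hw0⟩ := exists_ne (0 : weightSpace W χ)
  refine ⟨χ, w, w.2, by simpa using hw0, fun x => ?_⟩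
  rw [mem_weightSpace] at hw
  simpa using congrArg Subtype.val (hw x)

variable (b : LieSubalgebra k L) [LieAlgebra.IsSolvable b]

theorem LieSubmodule.exists_forall_lie_sub_smul_mem_of_not_le (N : LieSubmodule k L M)
    (V : Submodule k M) [FiniteDimensional k V] (hbV : ∀ x ∈ b, ∀ v ∈ V, ⁅x, v⁆ ∈ V)
    (hVN : ¬V ≤ N) :
    ∃ v ∈ V, v ∉ N ∧ ∀ x : b, ∃ c : k, ⁅(x : L), v⁆ - c • v ∈ N := by
  let π := (Quotient.mk' N).restrictLie b
  let W := ({ V with lie_mem := fun {x _} hv => hbV x x.2 _ hv } : LieSubmodule k b M).map π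
  have : Module.Finite k W := Module.Finite.map V (π : M →ₗ[k] M ⧸ N)
  have : Nontrivial W := by
    obtain ⟨v, hvV, hvN⟩ := SetLike.not_le_iff_exists.mp hVN
    exact nontrivial_of_ne ⟨π v, v, hvV, rfl⟩ 0 (by simpa [π] using hvN)
  obtain ⟨χ, w, ⟨v, hvV, rfl⟩, hw0, hw⟩ := W.exists_forall_lie_eq_smul_of_isSolvable
  refine ⟨v, hvV, by simpa [π] using hw0, fun x => ⟨χ x, ?_⟩⟩
  rw [← Quotient.mk_eq_zero, map_sub, map_smul, LieModuleHom.map_lie]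
  exact sub_eq_zero.mpr (hw x)

theorem LieSubmodule.reflTransGen_isHighestWeightStep_top (V : Submodule k M)
    [FiniteDimensional k V] (hbV : ∀ x ∈ b, ∀ v ∈ V, ⁅x, v⁆ ∈ V)
    (hgen : lieSpan k L (V : Set M) = ⊤) (N : LieSubmodule k L M) :
    Relation.ReflTransGen (IsHighestWeightStep b) N ⊤ := by
  let traceOnV (N : LieSubmodule k L M) : Submodule k V := (N : Submodule k M).comap V.subtype
  induction N using (InvImage.wf traceOnV wellFounded_gt).induction with
  | _ N ih =>
    by_cases hN : N = ⊤
    · exact hN ▸ .refl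
    have hVN : ¬V ≤ N := fun h => hN (eq_top_iff.2 (hgen ▸ lieSpan_le.2 h))
    obtain ⟨v, hvV, hvN, hv⟩ := exists_forall_lie_sub_smul_mem_of_not_le b N V hbV hVN
    have hvN' : v ∈ N ⊔ lieSpan k L {v} :=
      (le_sup_right : lieSpan k L {v} ≤ _) (subset_lieSpan rfl)
    refine .head ⟨v, hvN', hvN, rfl, hv⟩ (ih _ ?_)
    exact SetLike.lt_iff_le_and_exists.2 ⟨Submodule.comap_mono
      ((toSubmodule_le_toSubmodule _ _).2 le_sup_left), ⟨v, hvV⟩, hvN', hvN⟩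

end LieTheorem

theorem filtration_by_highest_weight_modules_general
    (L : Type*) [LieRing L] [LieAlgebra ℂ L]
    (b : LieSubalgebra ℂ L) (hb : LieAlgebra.IsSolvable b)
    (M : Type*) [AddCommGroup M] [Module ℂ M] [LieRingModule L M] [LieModule ℂ L M]
    [Nontrivial M]
    (V : Submodule ℂ M) (hVfd : FiniteDimensional ℂ V)
    (hbV : ∀ x ∈ b, ∀ v ∈ V, ⁅x, v⁆ ∈ V)
    (hgen : LieSubmodule.lieSpan ℂ L (V : Set M) = ⊤) :
    ∃ n : ℕ, 1 ≤ n ∧ ∃ f : ℕ → LieSubmodule ℂ L M,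
      f 0 = ⊥ ∧ f n = ⊤ ∧ (∀ i < n, f i ≤ f (i + 1)) ∧
      ∀ i < n, ∃ v : M, v ∈ f (i + 1) ∧ v ∉ f i ∧
        f (i + 1) = f i ⊔ LieSubmodule.lieSpan ℂ L {v} ∧
        ∀ x : b, ∃ c : ℂ, ⁅(x : L), v⁆ - c • v ∈ f i := by
  obtain ⟨n, f, hf0, hfn, hf⟩ :=
    (reflTransGen_isHighestWeightStep_top b V hbV hgen ⊥).exists_nat_chain
  refine ⟨n, Nat.one_le_iff_ne_zero.2 ?_, f, hf0, hfn, fun i hi => (hf i hi).le, hf⟩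
  rintro rfl
  exact bot_ne_top (hf0.symm.trans hfn)

/-- A nonzero Lie module over a finite-dimensional complex Lie algebra,
generated by a nonzero finite-dimensional subspace stable under a solvable subalgebra `b`,
admits a finite filtration by `L`-submodules whose successive quotients are nonzero highest
weight modules: each step is obtained by adjoining a vector that is a common `b`-eigenvector
modulo the previous step. -/
theorem filtration_by_highest_weight_modules
    (L : Type*) [LieRing L] [LieAlgebra ℂ L] [FiniteDimensional ℂ L]
    (b : LieSubalgebra ℂ L) (hb : LieAlgebra.IsSolvable b)
    (M : Type*) [AddCommGroup M] [Module ℂ M] [LieRingModule L M] [LieModule ℂ L M]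
    [Nontrivial M]
    (V : Submodule ℂ M) (hVne : V ≠ ⊥) (hVfd : FiniteDimensional ℂ V)
    (hbV : ∀ x ∈ b, ∀ v ∈ V, ⁅x, v⁆ ∈ V)
    (hgen : LieSubmodule.lieSpan ℂ L (V : Set M) = ⊤) :
    ∃ n : ℕ, 1 ≤ n ∧ ∃ f : ℕ → LieSubmodule ℂ L M,
      f 0 = ⊥ ∧ f n = ⊤ ∧ (∀ i < n, f i ≤ f (i + 1)) ∧
      ∀ i < n, ∃ v : M, v ∈ f (i + 1) ∧ v ∉ f i ∧
        f (i + 1) = f i ⊔ LieSubmodule.lieSpan ℂ L {v} ∧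
        ∀ x : b, ∃ c : ℂ, ⁅(x : L), v⁆ - c • v ∈ f i :=
  filtration_by_highest_weight_modules_general L b hb M V hVfd hbV hgen
end

section
/- Let L be a Lie algebra over a field k, L₀ a Lie subalgebra and J a Lie ideal of L such that L = L₀ + J as k-subspaces. Let M be a Lie module over L and g : J → k a function such that u · v = g(u) • v for all u ∈ J and v ∈ M. Then a k-subspace N of M is an L-submodule if and only if it is an L₀-submodule of M regarded as a Lie module over L₀. In particular, the maximal proper L-submodules of M are exactly the maximal proper L₀-submodules, and M is simple as an L-module if and only if it is simple as an L₀-module. -/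
/-- If `L = L₀ + J` with `J` a Lie ideal acting by scalars (via `g`) on a
Lie module `M`, then a subspace of `M` is an `L`-submodule iff it is an `L₀`-submodule; in
particular the maximal proper submodules over `L` and over `L₀` coincide, and `M` is simple
over `L` iff it is simple over `L₀`. -/
theorem submodules_over_L_eq_submodules_over_L0
    (k : Type*) [Field k]
    (L : Type*) [LieRing L] [LieAlgebra k L]
    (L₀ : LieSubalgebra k L) (J : LieIdeal k L)
    (hsum : ∀ z : L, ∃ a ∈ L₀, ∃ u ∈ J, z = a + u)
    (M : Type*) [AddCommGroup M] [Module k M] [LieRingModule L M] [LieModule k L M]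
    (g : J → k) (hact : ∀ (u : J) (v : M), ⁅(u : L), v⁆ = g u • v) :
    (∀ N : Submodule k M,
      (∀ x : L, ∀ m ∈ N, ⁅x, m⁆ ∈ N) ↔ (∀ x ∈ L₀, ∀ m ∈ N, ⁅x, m⁆ ∈ N)) ∧
    (∀ N : Submodule k M,
      ((∀ x : L, ∀ m ∈ N, ⁅x, m⁆ ∈ N) ∧ N ≠ ⊤ ∧
        ∀ N' : Submodule k M, (∀ x : L, ∀ m ∈ N', ⁅x, m⁆ ∈ N') → N < N' → N' = ⊤) ↔
      ((∀ x ∈ L₀, ∀ m ∈ N, ⁅x, m⁆ ∈ N) ∧ N ≠ ⊤ ∧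
        ∀ N' : Submodule k M, (∀ x ∈ L₀, ∀ m ∈ N', ⁅x, m⁆ ∈ N') → N < N' → N' = ⊤)) ∧
    ((∀ N : Submodule k M, (∀ x : L, ∀ m ∈ N, ⁅x, m⁆ ∈ N) → N = ⊥ ∨ N = ⊤) ↔
     (∀ N : Submodule k M, (∀ x ∈ L₀, ∀ m ∈ N, ⁅x, m⁆ ∈ N) → N = ⊥ ∨ N = ⊤)) := by

  have key : ∀ N : Submodule k M,
      (∀ x : L, ∀ m ∈ N, ⁅x, m⁆ ∈ N) ↔ (∀ x ∈ L₀, ∀ m ∈ N, ⁅x, m⁆ ∈ N) := by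
    intro N
    constructor
    · intro h x _ m hm; exact h x m hm
    · intro h x m hm
      obtain ⟨a, ha, u, hu, rfl⟩ := hsum x
      have : ⁅a + u, m⁆ = ⁅a, m⁆ + ⁅u, m⁆ := add_lie a u m
      rw [this]
      exact N.add_mem (h a ha m hm)
        (by rw [hact ⟨u, hu⟩ m]; exact N.smul_mem _ hm)
  refine ⟨key, ?_, ?_⟩
  · intro N
    constructor
    · rintro ⟨h1, h2, h3⟩
      exact ⟨(key N).mp h1, h2, fun N' hN' => h3 N' ((key N').mpr hN')⟩
    · rintro ⟨h1, h2, h3⟩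
      exact ⟨(key N).mpr h1, h2, fun N' hN' => h3 N' ((key N').mp hN')⟩
  · constructor
    · intro h N hN; exact h N ((key N).mpr hN)
    · intro h N hN; exact h N ((key N).mp hN)
end

section
/- Let L be a Lie algebra over a field k, J a Lie ideal of L, f ∈ L, and g : J → k a linear map such that g((ad f)^j (u)) = 0 for every u ∈ J and every j ≥ 1 (note (ad f)^j (u) ∈ J since J is an ideal). Let M be a Lie module over L and w ∈ M a vector with u · w = g(u) • w for every u ∈ J. Then for every n ∈ ℕ and every u ∈ J: u · (fⁿ · w) = g(u) • (fⁿ · w), where fⁿ · denotes the n-fold iterated action of f on M. -/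
/-!
Since `J` is an ideal, `⁅f, u⁆ ∈ J` for `u ∈ J`, and the Leibniz rule gives
`⁅u, ⁅f, m⁆⁆ = ⁅f, ⁅u, m⁆⁆ - ⁅⁅f, u⁆, m⁆`. So as soon as the weight `g` vanishes on `⁅f, J⁆`,
the weight space of `g` is stable under the action of `f`, hence under all its iterates.
-/

theorem lieIdeal_adPow_mem
    (k : Type*) [Field k]
    (L : Type*) [LieRing L] [LieAlgebra k L]
    (J : LieIdeal k L) (f : L) {u : L} (hu : u ∈ J) (j : ℕ) :
    ((LieAlgebra.ad k L f) ^ j) u ∈ J := by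
  induction j with
  | zero => simpa using hu
  | succ i ih =>
    rw [pow_succ', Module.End.mul_apply, LieAlgebra.ad_apply]
    exact J.lie_mem ih

namespace LieModule

variable {R L M : Type*} [CommRing R] [LieRing L] [LieAlgebra R L]
  [AddCommGroup M] [Module R M] [LieRingModule L M] [LieModule R L M]

lemma lie_mem_weightSpace_of_apply_lie_eq_zero {J : LieIdeal R L} {χ : J → R} {z : L}
    (hχ : ∀ u : J, χ ⁅z, u⁆ = 0) {m : M} (hm : m ∈ weightSpace M χ) :
    ⁅z, m⁆ ∈ weightSpace M χ := by
  rw [mem_weightSpace] at hm ⊢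
  intro u
  have hzu : ⁅⁅z, (u : L)⁆, m⁆ = 0 := by
    change ⁅(⁅z, u⁆ : J), m⁆ = 0
    rw [hm, hχ, zero_smul]
  change ⁅(u : L), ⁅z, m⁆⁆ = χ u • ⁅z, m⁆
  calc ⁅(u : L), ⁅z, m⁆⁆ = ⁅z, ⁅(u : L), m⁆⁆ - ⁅⁅z, (u : L)⁆, m⁆ :=
        eq_sub_of_add_eq' (leibniz_lie z (u : L) m).symm
    _ = χ u • ⁅z, m⁆ := by
        rw [hzu, sub_zero]
        exact (congrArg _ (hm u)).trans (lie_smul _ _ _)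

lemma iterate_lie_mem_weightSpace_of_apply_lie_eq_zero {J : LieIdeal R L} {χ : J → R} {z : L}
    (hχ : ∀ u : J, χ ⁅z, u⁆ = 0) {m : M} (hm : m ∈ weightSpace M χ) (n : ℕ) :
    (fun v : M => ⁅z, v⁆)^[n] m ∈ weightSpace M χ :=
  Set.MapsTo.iterate (fun _ ↦ lie_mem_weightSpace_of_apply_lie_eq_zero hχ) n hm

end LieModule

/-- If `g : J → k` kills `(ad f)^j u` for all `j ≥ 1` and `u ∈ J`, and `w`
is a common `J`-eigenvector with eigenvalue function `g`, then so is each iterate `fⁿ · w`. -/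
theorem iterated_action_is_eigenvector
    (k : Type*) [Field k]
    (L : Type*) [LieRing L] [LieAlgebra k L]
    (J : LieIdeal k L) (f : L) (g : J →ₗ[k] k)
    (hg : ∀ (u : L) (hu : u ∈ J) (j : ℕ), 1 ≤ j →
      g ⟨((LieAlgebra.ad k L f) ^ j) u, lieIdeal_adPow_mem k L J f hu j⟩ = 0)
    (M : Type*) [AddCommGroup M] [Module k M] [LieRingModule L M] [LieModule k L M]
    (w : M) (hw : ∀ u : J, ⁅(u : L), w⁆ = g u • w) :
    ∀ (n : ℕ) (u : J),
      ⁅(u : L), (fun v : M => ⁅f, v⁆)^[n] w⁆ = g u • (fun v : M => ⁅f, v⁆)^[n] w := by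
  have hgf : ∀ u : J, g ⁅f, u⁆ = 0 := fun u ↦ by
    simpa [← LieSubmodule.coe_bracket] using hg u u.2 1 le_rfl
  have hw' : w ∈ LieModule.weightSpace M g := (LieModule.mem_weightSpace _ _).2 hw
  exact fun n ↦ (LieModule.mem_weightSpace _ _).1
    (LieModule.iterate_lie_mem_weightSpace_of_apply_lie_eq_zero hgf hw' n)
end
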